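/- Let Λ be a σ-compact metric space, X a separable Fréchet space, and (T(λ))_{λ∈Λ} a continuous family of continuous linear operators on X (meaning λ ↦ T(λ)(x) is continuous for each x). Suppose that for every non-empty open subset V of X and every compact subset K of Λ there exists δ > 0 such that for every non-empty open subset U of X and every M ∈ ℕ there exists x ∈ U with: for all λ ∈ K there exists n ≥ M with #{0 ≤ m ≤ n : T(λ)^m(x) ∈ V}/(n+1) > δ. Then the set of vectors x that are upper frequently hypercyclic for every T(λ), λ ∈ Λ, is residual in X. -/

import Mathlib

/-! Baire category. For a basic open set `V`, a compact piece `K` of `Λ` and a threshold `M`, the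
vectors `x` such that every `T λ`, `λ ∈ K`, visits `V` with frequency above `δ(V, K)` at some time
`n ≥ M` form a dense open set: density is the hypothesis, and openness follows from compactness
of `K` once `(λ, x) ↦ T λ x` is jointly continuous on `K × X`, which Banach–Steinhaus gives
since `{T λ : λ ∈ K}` is pointwise bounded. Countably many such sets suffice, and every vector
in their intersection is upper frequently hypercyclic for all `T λ`.
-/

open Filter Finset
open scoped Classical

/-- Proportion of times `m ≤ n` at which the orbit of `x` under `S` lies in `V`. -/
noncomputable def visitProp {X : Type*} (S : X → X) (x : X) (V : Set X) (n : ℕ) : ℝ :=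
  (((Finset.range (n + 1)).filter (fun m => S^[m] x ∈ V)).card : ℝ) / (n + 1)

/-- `x` is upper frequently hypercyclic for `S`. -/
def IsUFHC {X : Type*} [TopologicalSpace X] (S : X → X) (x : X) : Prop :=
  ∀ V : Set X, IsOpen V → V.Nonempty →
    0 < Filter.atTop.limsup (fun n : ℕ => visitProp S x V n)

open Topology Function

section visitProp

variable {X Y : Type*}

lemma visitProp_le_one (S : X → X) (x : X) (V : Set X) (n : ℕ) : visitProp S x V n ≤ 1 := by
  rw [visitProp, div_le_one (by positivity)]
  exact_mod_cast (card_filter_le _ _).trans (card_range (n + 1)).le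

lemma visitProp_le_visitProp {S S' : X → X} {x x' : X} {V V' : Set X} {n : ℕ}
    (h : ∀ m ≤ n, S^[m] x ∈ V → S'^[m] x' ∈ V') :
    visitProp S x V n ≤ visitProp S' x' V' n := by
  refine div_le_div_of_nonneg_right ?_ (by positivity)
  refine Nat.cast_le.2 (card_le_card fun m hm => ?_)
  simp only [mem_filter, mem_range] at hm ⊢
  exact ⟨hm.1, h m (Nat.lt_succ_iff.1 hm.1) hm.2⟩

lemma limsup_visitProp_pos {S : X → X} {x : X} {V : Set X} {δ : ℝ} (hδ : 0 < δ)
    (h : ∀ M, ∃ n ≥ M, δ < visitProp S x V n) :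
    0 < atTop.limsup (fun n => visitProp S x V n) := by
  have hfreq : ∃ᶠ n in atTop, δ ≤ visitProp S x V n :=
    frequently_atTop.2 fun M => (h M).imp fun _ hn => ⟨hn.1, hn.2.le⟩
  exact hδ.trans_le <| le_limsup_of_frequently_le hfreq
    (isBoundedUnder_of ⟨1, visitProp_le_one S x V⟩)

lemma isUFHC_of_isTopologicalBasis [TopologicalSpace X] {b : Set (Set X)}
    (hb : TopologicalSpace.IsTopologicalBasis b) {S : X → X} {x : X}
    (h : ∀ V ∈ b, V.Nonempty → ∃ δ > 0, ∀ M, ∃ n ≥ M, δ < visitProp S x V n) :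
    IsUFHC S x := by
  rintro W hW ⟨y, hy⟩
  obtain ⟨V, hVb, hyV, hVW⟩ := hb.exists_subset_of_mem_open hy hW
  obtain ⟨δ, hδ, hvisit⟩ := h V hVb ⟨y, hyV⟩
  refine limsup_visitProp_pos hδ fun M => ?_
  obtain ⟨n, hnM, hn⟩ := hvisit M
  exact ⟨n, hnM, hn.trans_le (visitProp_le_visitProp fun _ _ hm => hVW hm)⟩

/-- Lower semicontinuity: the visits up to time `n` are finitely many open conditions. -/
lemma isOpen_setOf_lt_visitProp [TopologicalSpace X] [TopologicalSpace Y] {S : Y → X → X}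
    {x : Y → X} (hS : ∀ m, Continuous fun y => (S y)^[m] (x y)) {V : Set X} (hV : IsOpen V)
    (δ : ℝ) (n : ℕ) : IsOpen {y | δ < visitProp (S y) (x y) V n} := by
  refine isOpen_iff_mem_nhds.2 fun y₀ hy₀ => ?_
  have hvisits : ∀ᶠ y in 𝓝 y₀, ∀ m ∈ (range (n + 1)).filter (fun m => (S y₀)^[m] (x y₀) ∈ V),
      (S y)^[m] (x y) ∈ V :=
    (eventually_all_finset _).2 fun m hm =>
      (hS m).continuousAt.preimage_mem_nhds (hV.mem_nhds (mem_filter.1 hm).2)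
  filter_upwards [hvisits] with y hy
  exact hy₀.trans_le <| visitProp_le_visitProp fun m hmn hm =>
    hy m (mem_filter.2 ⟨mem_range.2 (Nat.lt_succ_of_le hmn), hm⟩)

end visitProp

lemma isOpen_setOf_forall_mem_exists_lt_visitProp {Λ X : Type*} [TopologicalSpace Λ]
    [TopologicalSpace X] {S : Λ → X → X} {K : Set Λ} (hK : IsCompact K)
    (hS : ∀ m, Continuous fun p : K × X => (S p.1)^[m] p.2) {V : Set X} (hV : IsOpen V)
    (δ : ℝ) (M : ℕ) : IsOpen {x | ∀ lam ∈ K, ∃ n ≥ M, δ < visitProp (S lam) x V n} := by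
  have : CompactSpace K := isCompact_iff_compactSpace.1 hK
  refine isOpen_iff_mem_nhds.2 fun x₀ hx₀ => ?_
  have hlocal : ∀ lam : K, ∀ᶠ p : X × K in 𝓝 (x₀, lam),
      ∃ n ≥ M, δ < visitProp (S p.2) p.1 V n := fun lam => by
    obtain ⟨n, hnM, hn⟩ := hx₀ lam lam.2
    have hswap (m : ℕ) : Continuous fun p : X × K => (S p.2)^[m] p.1 :=
      (hS m).comp continuous_swap
    have hopen := isOpen_setOf_lt_visitProp hswap hV δ n
    have hnear : ∀ᶠ p : X × K in 𝓝 (x₀, lam), δ < visitProp (S p.2) p.1 V n :=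
      hopen.mem_nhds hn
    exact hnear.mono fun p hp => ⟨n, hnM, hp⟩
  filter_upwards [isCompact_univ.eventually_forall_of_forall_eventually
    (P := fun x (lam : K) => ∃ n ≥ M, δ < visitProp (S lam) x V n) fun lam _ => hlocal lam]
    with x hx lam hlam using hx ⟨lam, hlam⟩ trivial

lemma Equicontinuous.continuous_uncurry {ι X α : Type*} [TopologicalSpace ι]
    [TopologicalSpace X] [UniformSpace α] {F : ι → X → α} (hF : Equicontinuous F)
    (hcont : ∀ x, Continuous fun i => F i x) : Continuous (uncurry F) := by
  refine continuous_iff_continuousAt.2 fun ⟨i₀, x₀⟩ => ?_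
  refine Uniform.tendsto_nhds_right.2 fun U hU => ?_
  obtain ⟨W, hW, hWU⟩ := comp_mem_uniformity_sets hU
  have hparam : ∀ᶠ p : ι × X in 𝓝 (i₀, x₀), (F i₀ x₀, F p.1 x₀) ∈ W :=
    (continuousAt_fst (p := (i₀, x₀))).eventually
      ((Uniform.tendsto_nhds_right.1 ((hcont x₀).tendsto i₀)).eventually_mem hW)
  have hpoint : ∀ᶠ p : ι × X in 𝓝 (i₀, x₀), (F p.1 x₀, F p.1 p.2) ∈ W :=
    ((continuousAt_snd (p := (i₀, x₀))).eventually (hF x₀ W hW)).mono fun p hp => hp p.1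
  refine mem_map.2 ?_
  filter_upwards [hparam, hpoint] with p h₁ h₂ using hWU ⟨_, h₁, h₂⟩

lemma Continuous.uncurry_iterate {Y X : Type*} [TopologicalSpace Y] [TopologicalSpace X]
    {S : Y → X → X} (hS : Continuous (uncurry S)) (m : ℕ) :
    Continuous (uncurry fun y => (S y)^[m]) := by
  induction m with
  | zero => exact continuous_snd
  | succ m ih =>
    simp only [iterate_succ']
    exact hS.comp (continuous_fst.prodMk ih)

lemma continuous_iterate_of_isCompact {Λ X : Type*} [TopologicalSpace Λ] [AddCommGroup X]
    [Module ℝ X] [UniformSpace X] [IsUniformAddGroup X] [ContinuousSMul ℝ X]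
    [LocallyConvexSpace ℝ X] [BaireSpace X] (T : Λ → X →L[ℝ] X)
    (hT : ∀ x, Continuous fun lam => T lam x) {K : Set Λ} (hK : IsCompact K) (m : ℕ) :
    Continuous fun p : K × X => (T p.1)^[m] p.2 := by
  have : CompactSpace K := isCompact_iff_compactSpace.1 hK
  have hTK : ∀ x, Continuous fun lam : K => T lam x := fun x => (hT x).comp continuous_subtype_val
  have hequi : Equicontinuous fun lam : K => ⇑(T lam) :=
    (PolynormableSpace.banach_steinhaus (𝓕 := fun lam : K => T lam) fun x =>
      (isCompact_range (hTK x)).isVonNBounded ℝ).equicontinuous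
  exact (hequi.continuous_uncurry hTK).uncurry_iterate m

theorem stmt5 {Λ : Type*} [MetricSpace Λ] [SigmaCompactSpace Λ]
    {X : Type*} [AddCommGroup X] [Module ℝ X] [UniformSpace X] [IsUniformAddGroup X]
    [CompleteSpace X] [ContinuousSMul ℝ X] [LocallyConvexSpace ℝ X]
    [TopologicalSpace.MetrizableSpace X] [TopologicalSpace.SeparableSpace X]
    (T : Λ → X →L[ℝ] X) (hT : ∀ x : X, Continuous fun lam => T lam x)
    (h : ∀ V : Set X, IsOpen V → V.Nonempty → ∀ K : Set Λ, IsCompact K →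
      ∃ δ > (0 : ℝ), ∀ U : Set X, IsOpen U → U.Nonempty → ∀ M : ℕ,
        ∃ x ∈ U, ∀ lam ∈ K, ∃ n ≥ M, δ < visitProp (T lam) x V n) :
    {x : X | ∀ lam : Λ, IsUFHC (T lam) x} ∈ residual X := by
  have : (uniformity X).IsCountablyGenerated := by
    rw [uniformity_eq_comap_nhds_zero X]
    infer_instance
  have : SecondCountableTopology X := UniformSpace.secondCountable_of_separable X
  obtain ⟨b, hbc, hbne, hb⟩ := TopologicalSpace.exists_countable_basis X
  have : Countable b := hbc.to_subtype
  have hbV (V : b) : IsOpen (V : Set X) ∧ (V : Set X).Nonempty :=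
    ⟨hb.isOpen V.2, Set.nonempty_iff_ne_empty.2 fun hV => hbne (hV ▸ V.2)⟩
  choose δ hδ hδdense using fun (V : b) (j : ℕ) =>
    h V (hbV V).1 (hbV V).2 _ (isCompact_compactCovering Λ j)
  let G (V : b) (j M : ℕ) : Set X :=
    {x | ∀ lam ∈ compactCovering Λ j, ∃ n ≥ M, δ V j < visitProp (T lam) x V n}
  have hG (V : b) (j M : ℕ) : G V j M ∈ residual X :=
    residual_of_dense_open
      (isOpen_setOf_forall_mem_exists_lt_visitProp (isCompact_compactCovering Λ j)
        (continuous_iterate_of_isCompact T hT (isCompact_compactCovering Λ j)) (hbV V).1 _ M)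
      (dense_iff_inter_open.2 fun U hU hUne => hδdense V j U hU hUne M)
  refine mem_of_superset (countable_iInter_mem.2 fun V => countable_iInter_mem.2 fun j =>
    countable_iInter_mem.2 fun M => hG V j M) fun x hx lam => ?_
  obtain ⟨j, hj⟩ := exists_mem_compactCovering lam
  refine isUFHC_of_isTopologicalBasis hb fun V hV _ => ⟨δ ⟨V, hV⟩ j, hδ _ _, fun M => ?_⟩
  simp only [Set.mem_iInter] at hx
  exact hx ⟨V, hV⟩ j M lam hj
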